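/- arXiv:math/0608600 — 2 statements merged into one kernel-verified Lean document; each statement's English description precedes it below -/
import Mathlib

section
/- For ζ = x + iy ∈ ℂ and q ∈ ℂ with |q| < 1, the identity ϑ₁(ζ,q)·ϑ₁(ζ̄,q) + ϑ₂(ζ,q)·ϑ₂(ζ̄,q) = 2 Σ_{(u,v)∈ℤ²} e^{4iux} e^{2i(2v+1)iy} q^{2u² + (2v+1)²/2} holds, where the theta functions are defined by their series ϑ₁(ζ,q) = Σ_k (−1)^{k} i e^{(2k+1)iζ} q^{(k+1/2)²} and ϑ₂(ζ,q) = Σ_k e^{(2k+1)iζ} q^{(k+1/2)²}. -/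
open Complex

/-- `ϑ₁(ζ|τ) = Σ_k i(−1)^k e^{(2k+1)iζ} q^{(k+1/2)²}` with `q = e^{iπτ}`,
`q^s = e^{iπτs}`. -/
noncomputable def theta1 (ζ τ : ℂ) : ℂ :=
  ∑' k : ℤ, (-1 : ℂ) ^ k * Complex.I * Complex.exp ((2 * (k : ℂ) + 1) * Complex.I * ζ) *
    Complex.exp ((Real.pi : ℂ) * Complex.I * τ * ((k : ℂ) + 1 / 2) ^ 2)

/-- `ϑ₂(ζ|τ) = Σ_k e^{(2k+1)iζ} q^{(k+1/2)²}` with `q = e^{iπτ}`. -/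
noncomputable def theta2 (ζ τ : ℂ) : ℂ :=
  ∑' k : ℤ, Complex.exp ((2 * (k : ℂ) + 1) * Complex.I * ζ) *
    Complex.exp ((Real.pi : ℂ) * Complex.I * τ * ((k : ℂ) + 1 / 2) ^ 2)

/-!
Both series are built from the same terms `a_k(ζ) = e^{(2k+1)iζ} q^{(k+1/2)²}`, those of `ϑ₁`
carrying the extra factor `i(-1)^k`. Multiplying out the absolutely convergent series, the left
side becomes `Σ_{k,l} (1 - (-1)^{k+l}) a_k(ζ) a_l(ζ̄)`: the pairs with `k + l` even cancel and the
others count twice. The pairs with `k + l` odd are exactly `(u + v, u - v - 1)` for `(u, v) ∈ ℤ²`,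
and for these `a_k(ζ) a_l(ζ̄)` is the summand on the right.
-/

open scoped Real

noncomputable def theta2Term (ζ τ : ℂ) (k : ℤ) : ℂ :=
  exp ((2 * (k : ℂ) + 1) * I * ζ) * exp (π * I * τ * ((k : ℂ) + 1 / 2) ^ 2)

lemma theta2Term_eq_mul_jacobiTheta₂_term (ζ τ : ℂ) (k : ℤ) :
    theta2Term ζ τ k = exp (I * ζ + π * I * τ / 4) * jacobiTheta₂_term k (ζ / π + τ / 2) τ := by
  have hπ : (π : ℂ) ≠ 0 := ofReal_ne_zero.mpr Real.pi_ne_zero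
  rw [theta2Term, jacobiTheta₂_term, ← exp_add, ← exp_add]
  congr 1
  field_simp
  ring

lemma summable_norm_theta2Term (ζ : ℂ) {τ : ℂ} (hτ : 0 < τ.im) :
    Summable fun k => ‖theta2Term ζ τ k‖ := by
  exact summable_norm_iff.mpr <| (((summable_jacobiTheta₂_term_iff _ τ).mpr hτ).mul_left _).congr
    fun k => (theta2Term_eq_mul_jacobiTheta₂_term ζ τ k).symm

lemma theta1_eq_tsum (ζ τ : ℂ) : theta1 ζ τ = ∑' k : ℤ, (-1 : ℂ) ^ k * I * theta2Term ζ τ k := by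
  simp only [theta1, theta2Term, mul_assoc]

lemma theta2_eq_tsum (ζ τ : ℂ) : theta2 ζ τ = ∑' k : ℤ, theta2Term ζ τ k := rfl

lemma theta1_mul_theta1_add_theta2_mul_theta2 (ζ ξ : ℂ) {τ : ℂ} (hτ : 0 < τ.im) :
    theta1 ζ τ * theta1 ξ τ + theta2 ζ τ * theta2 ξ τ =
      ∑' p : ℤ × ℤ, (1 - (-1 : ℂ) ^ (p.1 + p.2)) * (theta2Term ζ τ p.1 * theta2Term ξ τ p.2) := by
  have twisted (w : ℂ) : Summable fun k : ℤ => ‖(-1 : ℂ) ^ k * I * theta2Term w τ k‖ := by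
    simpa using summable_norm_theta2Term w hτ
  have plain (w : ℂ) := summable_norm_theta2Term w hτ
  rw [theta1_eq_tsum, theta1_eq_tsum, theta2_eq_tsum, theta2_eq_tsum,
    tsum_mul_tsum_of_summable_norm (twisted ζ) (twisted ξ),
    tsum_mul_tsum_of_summable_norm (plain ζ) (plain ξ),
    ← (summable_mul_of_summable_norm (twisted ζ) (twisted ξ)).tsum_add
      (summable_mul_of_summable_norm (plain ζ) (plain ξ))]
  congr 1 with p
  rw [zpow_add₀ (by norm_num)]
  linear_combination (-1 : ℂ) ^ p.1 * (-1) ^ p.2 * theta2Term ζ τ p.1 * theta2Term ξ τ p.2 * I_mul_I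

lemma tsum_eq_tsum_comp_of_odd_of_ne_zero {M : Type*} [AddCommMonoid M] [TopologicalSpace M]
    (f : ℤ × ℤ → M) (hf : ∀ p, f p ≠ 0 → Odd (p.1 + p.2)) :
    ∑' p, f p = ∑' p : ℤ × ℤ, f (p.1 + p.2, p.1 - p.2 - 1) := by
  refine (Function.Injective.tsum_eq (g := fun p : ℤ × ℤ => (p.1 + p.2, p.1 - p.2 - 1))
    ?_ fun p hp => ?_).symm
  · intro p q h
    simp only [Prod.mk.injEq] at h
    ext <;> omega
  · obtain ⟨m, hm⟩ := hf p hp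
    exact ⟨(m + 1, p.1 - m - 1), by ext <;> (dsimp only; omega)⟩

lemma theta2Term_mul_theta2Term_conj (x y : ℝ) (τ : ℂ) (u v : ℤ) :
    theta2Term (x + y * I) τ (u + v) * theta2Term (x - y * I) τ (u - v - 1) =
      exp (4 * I * u * x) * exp (2 * I * (2 * v + 1) * (I * y)) *
        exp (π * I * τ * (2 * u ^ 2 + (2 * v + 1) ^ 2 / 2)) := by
  simp only [theta2Term, ← exp_add]
  push_cast
  ring_nf

/-- For `ζ = x + iy`, `ϑ₁(ζ)ϑ₁(ζ̄) + ϑ₂(ζ)ϑ₂(ζ̄)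
= 2 Σ_{(u,v)} e^{4iux} e^{2i(2v+1)iy} q^{2u² + (2v+1)²/2}`. -/
theorem theta12_product_sum (x y : ℝ) (τ : ℂ) (hτ : 0 < τ.im) :
    theta1 ((x : ℂ) + (y : ℂ) * Complex.I) τ * theta1 ((x : ℂ) - (y : ℂ) * Complex.I) τ +
      theta2 ((x : ℂ) + (y : ℂ) * Complex.I) τ * theta2 ((x : ℂ) - (y : ℂ) * Complex.I) τ =
    2 * ∑' p : ℤ × ℤ,
      Complex.exp (4 * Complex.I * (p.1 : ℂ) * (x : ℂ)) *
        Complex.exp (2 * Complex.I * (2 * (p.2 : ℂ) + 1) * (Complex.I * (y : ℂ))) *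
        Complex.exp ((Real.pi : ℂ) * Complex.I * τ *
          (2 * (p.1 : ℂ) ^ 2 + (2 * (p.2 : ℂ) + 1) ^ 2 / 2)) := by
  rw [theta1_mul_theta1_add_theta2_mul_theta2 _ _ hτ, tsum_eq_tsum_comp_of_odd_of_ne_zero,
    ← tsum_mul_left]
  · congr 1 with p
    have hodd : Odd (p.1 + p.2 + (p.1 - p.2 - 1)) := ⟨p.1 - 1, by ring⟩
    rw [hodd.neg_one_zpow, theta2Term_mul_theta2Term_conj]
    norm_num
  · intro p hp
    refine Int.not_even_iff_odd.mp fun heven => hp ?_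
    rw [heven.neg_one_zpow, sub_self, zero_mul]
end

section
/- Let ϕ be a complex number with Re(ϕ) ∈ (0, π] and suppose r ∈ ℂ satisfies r + 1/r = e^{iϕ} − 2 with Im(r) > 0. Then |r| > 1. -/
/-!
For `Im r > 0`, `Im (r + r⁻¹) = Im r · (1 - 1/|r|²)` has the sign of `|r| - 1`, while
`e^{iϕ}` lies in the closed upper half-plane, so `|r| ≥ 1`. If `|r| = 1` then `r + r⁻¹ = 2 Re r ≥ -2`
is real; this forces `Re ϕ = π`, and then `e^{iϕ} - 2 = -e^{-Im ϕ} - 2 < -2`.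
-/

open Complex Real

namespace Complex

lemma im_add_inv (r : ℂ) : (r + r⁻¹).im = r.im * (1 - (normSq r)⁻¹) := by
  simp only [add_im, inv_im]
  ring

lemma one_le_norm_of_im_add_inv_nonneg {r : ℂ} (him : 0 < r.im) (h : 0 ≤ (r + r⁻¹).im) :
    1 ≤ ‖r‖ := by
  rw [im_add_inv] at h
  have hinv : (normSq r)⁻¹ ≤ 1 := by nlinarith
  have hq : 1 ≤ normSq r := by
    have hpos : 0 < normSq r := normSq_pos.2 fun h0 => by simp [h0] at him
    exact (inv_le_one₀ hpos).1 hinv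
  rw [norm_def]
  exact Real.one_le_sqrt.2 hq

lemma add_inv_eq_two_mul_re_of_norm_eq_one {r : ℂ} (hr : ‖r‖ = 1) : r + r⁻¹ = 2 * r.re := by
  rw [inv_def, normSq_eq_norm_sq, hr, one_pow, ofReal_inv, ofReal_one, inv_one, mul_one, add_conj]
  push_cast
  ring

lemma im_exp_I_mul_nonneg {ϕ : ℂ} (hϕ : ϕ.re ∈ Set.Icc 0 π) : 0 ≤ (exp (I * ϕ)).im := by
  rw [exp_im]
  simp only [mul_re, mul_im, I_re, I_im, zero_mul, one_mul, zero_sub, zero_add]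
  exact mul_nonneg (Real.exp_pos _).le (sin_nonneg_of_nonneg_of_le_pi hϕ.1 hϕ.2)

lemma re_exp_I_mul_neg_of_im_eq_zero {ϕ : ℂ} (hϕ : ϕ.re ∈ Set.Ioc 0 π)
    (h : (exp (I * ϕ)).im = 0) : (exp (I * ϕ)).re < 0 := by
  rw [exp_im] at h
  rw [exp_re]
  simp only [mul_re, mul_im, I_re, I_im, zero_mul, one_mul, zero_sub, zero_add] at h ⊢
  have hsin : Real.sin ϕ.re = 0 := (mul_eq_zero.1 h).resolve_left (Real.exp_pos _).ne'
  have hpi : ϕ.re = π := by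
    refine hϕ.2.eq_or_lt.resolve_right fun hlt => ?_
    exact (sin_pos_of_pos_of_lt_pi hϕ.1 hlt).ne' hsin
  rw [hpi, Real.cos_pi]
  simpa using Real.exp_pos (-ϕ.im)

end Complex

/-- If `Re ϕ ∈ (0, π]` and `r` satisfies `r + 1/r = e^{iϕ} - 2` with `Im r > 0`,
then `|r| > 1`. -/
theorem abs_root_gt_one (ϕ r : ℂ) (hre : ϕ.re ∈ Set.Ioc 0 Real.pi) (him : 0 < r.im)
    (h : r + 1 / r = Complex.exp (Complex.I * ϕ) - 2) :
    1 < ‖r‖ := by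
  rw [one_div] at h
  have him_eq : (r + r⁻¹).im = (exp (I * ϕ)).im := by simp [h]
  have hre_eq : (r + r⁻¹).re = (exp (I * ϕ)).re - 2 := by simp [h]
  have hle : 1 ≤ ‖r‖ := one_le_norm_of_im_add_inv_nonneg him
    (him_eq ▸ im_exp_I_mul_nonneg (Set.Ioc_subset_Icc_self hre))
  refine hle.lt_of_ne fun hr => ?_
  have hreal := add_inv_eq_two_mul_re_of_norm_eq_one hr.symm
  have hneg := re_exp_I_mul_neg_of_im_eq_zero hre (by rw [← him_eq, hreal]; simp)
  have hlow : -1 ≤ r.re := (abs_le.1 ((abs_re_le_norm r).trans hr.symm.le)).1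
  rw [hreal] at hre_eq
  simp only [mul_re, re_ofNat, ofReal_re, im_ofNat, ofReal_im, mul_zero, sub_zero] at hre_eq
  linarith
end
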